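/- For the induced ℂ××ℂ× action on T*ℂ⁴ given by (λ,μ)·(x,y,z,w) = (λx₀, λx₁, μy₀, μλ^{-n}y₁, λ⁻¹z₀, λ⁻¹z₁, μ⁻¹w₀, μ⁻¹λⁿw₁), the unstable locus is the union of the three linear subspaces {(x₀,x₁,0,0,z₀,z₁,w₀,w₁)}, {(0,0,y₀,y₁,z₀,z₁,w₀,0)}, and {(0,0,0,y₁,z₀,z₁,w₀,w₁)}. -/

import Mathlib

/-!
STATEMENT 11: For the induced `ℂ× × ℂ×`-action on `T*ℂ⁴ = ℂ⁸`,
`(λ,μ)·(x,y,z,w) = (λx₀, λx₁, μy₀, μλ^{-n}y₁, λ⁻¹z₀, λ⁻¹z₁, μ⁻¹w₀, μ⁻¹λⁿw₁)`,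
`ξ = (a,b)` acts by `√-1 diag(a,a,b,b-na,-a,-a,-b,na-b)`; with
`θ = (1/2)(c₀,c₁)`, `c₀,c₁ > 0`, the moment map along the flow is
`⟨μ(exp(√-1 tξ)v),ξ⟩ = -(1/2)∑ λ_k e^{-2λ_k t}|v_k|² + (1/2)(a c₀ + b c₁)`.
The unstable locus (points with some negative μ-weight, via Hilbert–Mumford)
is the union of the three linear subspaces
`{y₀ = y₁ = 0}`, `{x₀ = x₁ = w₁ = 0}`, `{x₀ = x₁ = y₀ = 0}`
(coordinates indexed `0:x₀,1:x₁,2:y₀,3:y₁,4:z₀,5:z₁,6:w₀,7:w₁`).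
-/

open Filter

namespace Stmt11

variable (n : ℕ) (c₀ c₁ : ℝ)

/-- The weights of the `ξ = (a,b)` action on the eight coordinates of `T*ℂ⁴`. -/
def wt (ξ : ℝ × ℝ) : Fin 8 → ℝ :=
  ![ξ.1, ξ.1, ξ.2, ξ.2 - n * ξ.1, -ξ.1, -ξ.1, -ξ.2, n * ξ.1 - ξ.2]

/-- `⟨μ(exp(√-1 t ξ) v), ξ⟩` for the action on `T*ℂ⁴`. -/
noncomputable def momentAlongFlow (ξ : ℝ × ℝ) (v : Fin 8 → ℂ) (t : ℝ) : ℝ :=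
  -(1/2 : ℝ) * ∑ k, wt n ξ k * Real.exp (-2 * wt n ξ k * t) * ‖v k‖ ^ 2
    + (1/2 : ℝ) * (ξ.1 * c₀ + ξ.2 * c₁)

/-- The μ-weight `w_μ^ξ(v)` in `EReal`. -/
noncomputable def weight (ξ : ℝ × ℝ) (v : Fin 8 → ℂ) : EReal :=
  Filter.limsup (fun t : ℝ => ((momentAlongFlow n c₀ c₁ ξ v t : ℝ) : EReal)) atTop

/-- Hilbert–Mumford semistability. -/
noncomputable def IsSemistable (v : Fin 8 → ℂ) : Prop :=
  ∀ ξ : ℝ × ℝ, ξ ≠ 0 → 0 ≤ weight n c₀ c₁ ξ v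

end Stmt11

/-!
Along the flow `t ↦ exp(√-1 tξ)v` the moment map pairing is `c - ½ ∑ λ_k e^{-2λ_k t}|v_k|²`,
where `λ_k` are the weights of `ξ` and `c = ½(a c₀ + b c₁)`. If some coordinate with `λ_k < 0` is
nonzero this tends to `+∞`; otherwise it tends to `c`. Hence `v` is unstable exactly when it lies
in `(T*ℂ⁴)^{ξ≥0}` for some `ξ = (a,b)` with `a c₀ + b c₁ < 0`, and a sign analysis of
`a, b, b - na` shows that the three subspaces are the maximal such loci, realised by
`ξ = (0,-1)`, `(-1,0)` and `(-1,-n)`.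
-/

open Topology Real

namespace Stmt11

section WeightedExpSum

variable {ι : Type*} [Fintype ι] (w : ι → ℝ) (v : ι → ℂ)

theorem tendsto_mul_exp_nhds_zero {l : ℝ} (hl : 0 ≤ l) :
    Tendsto (fun t => l * exp (-2 * l * t)) atTop (𝓝 0) := by
  rcases hl.eq_or_lt with rfl | hl
  · simp
  · have hexp : Tendsto (fun t => exp (-2 * l * t)) atTop (𝓝 0) :=
      tendsto_exp_atBot.comp <| (tendsto_const_mul_atBot_of_neg (by linarith)).2 tendsto_id
    simpa using hexp.const_mul l

theorem tendsto_mul_exp_atBot {l : ℝ} (hl : l < 0) :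
    Tendsto (fun t => l * exp (-2 * l * t)) atTop atBot :=
  (tendsto_const_mul_atBot_of_neg hl).2 <|
    tendsto_exp_atTop.comp <| (tendsto_const_mul_atTop_of_pos (by linarith)).2 tendsto_id

theorem mul_exp_le_abs (l : ℝ) {t : ℝ} (ht : 0 ≤ t) : l * exp (-2 * l * t) ≤ |l| := by
  rcases le_or_gt 0 l with hl | hl
  · rw [abs_of_nonneg hl]
    exact mul_le_of_le_one_right hl (exp_le_one_iff.2 (by nlinarith))
  · exact (mul_neg_of_neg_of_pos hl (exp_pos _)).le.trans (abs_nonneg l)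

theorem tendsto_sum_mul_exp_nhds_zero (hv : ∀ k, w k < 0 → v k = 0) :
    Tendsto (fun t => ∑ k, w k * exp (-2 * w k * t) * ‖v k‖ ^ 2) atTop (𝓝 0) := by
  have hterm (k : ι) : Tendsto (fun t => w k * exp (-2 * w k * t) * ‖v k‖ ^ 2) atTop (𝓝 0) := by
    rcases lt_or_ge (w k) 0 with hk | hk
    · simp [hv k hk]
    · simpa using (tendsto_mul_exp_nhds_zero hk).mul_const (‖v k‖ ^ 2)
  simpa using tendsto_finsetSum Finset.univ fun k _ => hterm k

theorem tendsto_sum_mul_exp_atBot {k : ι} (hk : w k < 0) (hvk : v k ≠ 0) :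
    Tendsto (fun t => ∑ j, w j * exp (-2 * w j * t) * ‖v j‖ ^ 2) atTop atBot := by
  classical
  set C := ∑ j, |w j| * ‖v j‖ ^ 2
  have hterm : Tendsto (fun t => w k * exp (-2 * w k * t) * ‖v k‖ ^ 2) atTop atBot :=
    (tendsto_mul_exp_atBot hk).atBot_mul_const (by positivity)
  refine tendsto_atBot_mono' _ ?_ (tendsto_atBot_add_const_right _ C hterm)
  filter_upwards [eventually_ge_atTop 0] with t ht
  have hrest : ∑ j ∈ Finset.univ.erase k, w j * exp (-2 * w j * t) * ‖v j‖ ^ 2 ≤ C :=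
    calc _ ≤ ∑ j ∈ Finset.univ.erase k, |w j| * ‖v j‖ ^ 2 :=
          Finset.sum_le_sum fun j _ =>
            mul_le_mul_of_nonneg_right (mul_exp_le_abs _ ht) (by positivity)
      _ ≤ C := Finset.sum_le_sum_of_subset_of_nonneg (Finset.erase_subset _ _)
          fun _ _ _ => by positivity
  rw [← Finset.add_sum_erase _ _ (Finset.mem_univ k)]
  linarith

end WeightedExpSum

variable (n : ℕ) (c₀ c₁ : ℝ)

theorem weight_eq_coe (ξ : ℝ × ℝ) (v : Fin 8 → ℂ) (hv : ∀ k, wt n ξ k < 0 → v k = 0) :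
    weight n c₀ c₁ ξ v = ((1 / 2 * (ξ.1 * c₀ + ξ.2 * c₁) : ℝ) : EReal) := by
  have h := ((tendsto_sum_mul_exp_nhds_zero _ v hv).const_mul (-(1 / 2 : ℝ))).add_const
    (1 / 2 * (ξ.1 * c₀ + ξ.2 * c₁))
  rw [mul_zero, zero_add] at h
  exact (EReal.tendsto_coe.2 h).limsup_eq

theorem weight_eq_top (ξ : ℝ × ℝ) (v : Fin 8 → ℂ) {k : Fin 8} (hk : wt n ξ k < 0)
    (hvk : v k ≠ 0) : weight n c₀ c₁ ξ v = ⊤ := by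
  have h := tendsto_atTop_add_const_right _ (1 / 2 * (ξ.1 * c₀ + ξ.2 * c₁)) <|
    (tendsto_const_mul_atTop_of_neg (by norm_num : -(1 / 2 : ℝ) < 0)).2
      (tendsto_sum_mul_exp_atBot _ v hk hvk)
  exact (EReal.tendsto_coe_nhds_top_iff.2 h).limsup_eq

theorem not_isSemistable_iff (v : Fin 8 → ℂ) :
    ¬ IsSemistable n c₀ c₁ v ↔
      ∃ ξ : ℝ × ℝ, ξ.1 * c₀ + ξ.2 * c₁ < 0 ∧ ∀ k, wt n ξ k < 0 → v k = 0 := by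
  simp only [IsSemistable, not_forall, not_le, exists_prop]
  constructor
  · rintro ⟨ξ, -, hξ⟩
    have hv : ∀ k, wt n ξ k < 0 → v k = 0 := fun k hk => by
      by_contra hvk
      simp [weight_eq_top n c₀ c₁ ξ v hk hvk] at hξ
    rw [weight_eq_coe n c₀ c₁ ξ v hv] at hξ
    exact ⟨ξ, by linarith [EReal.coe_lt_coe_iff.1 hξ], hv⟩
  · rintro ⟨ξ, hξ, hv⟩
    refine ⟨ξ, fun h => by simp [h] at hξ, ?_⟩
    rw [weight_eq_coe n c₀ c₁ ξ v hv]
    exact EReal.coe_lt_coe_iff.2 (by linarith)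

theorem coords_eq_zero_of_pairing_neg {ξ : ℝ × ℝ} {v : Fin 8 → ℂ} (hn : 0 < n) (hc₀ : 0 < c₀)
    (hc₁ : 0 < c₁) (hξ : ξ.1 * c₀ + ξ.2 * c₁ < 0) (hv : ∀ k, wt n ξ k < 0 → v k = 0) :
    ((v 2 = 0 ∧ v 3 = 0) ∨ (v 0 = 0 ∧ v 1 = 0 ∧ v 7 = 0)) ∨ (v 0 = 0 ∧ v 1 = 0 ∧ v 2 = 0) := by
  obtain ⟨a, b⟩ := ξ
  have hn : (0 : ℝ) < n := Nat.cast_pos.2 hn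
  rcases lt_or_ge a 0 with ha | ha
  · rcases lt_or_ge b 0 with hb | hb
    · exact .inr ⟨hv 0 ha, hv 1 ha, hv 2 hb⟩
    · exact .inl <| .inr ⟨hv 0 ha, hv 1 ha, hv 7 (show n * a - b < 0 by nlinarith)⟩
  · have hb : b < 0 := by nlinarith
    exact .inl <| .inl ⟨hv 2 hb, hv 3 (show b - n * a < 0 by nlinarith)⟩

theorem exists_pairing_neg_of_coords_eq_zero {v : Fin 8 → ℂ} (hc₀ : 0 < c₀) (hc₁ : 0 < c₁)
    (hv : ((v 2 = 0 ∧ v 3 = 0) ∨ (v 0 = 0 ∧ v 1 = 0 ∧ v 7 = 0)) ∨ (v 0 = 0 ∧ v 1 = 0 ∧ v 2 = 0)) :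
    ∃ ξ : ℝ × ℝ, ξ.1 * c₀ + ξ.2 * c₁ < 0 ∧ ∀ k, wt n ξ k < 0 → v k = 0 := by
  have hn : (0 : ℝ) ≤ n := n.cast_nonneg
  rcases hv with (⟨h2, h3⟩ | ⟨h0, h1, h7⟩) | ⟨h0, h1, h2⟩
  · refine ⟨(0, -1), by simpa using hc₁, fun k hk => ?_⟩
    fin_cases k <;> simp [wt] at hk ⊢ <;> first | assumption | linarith
  · refine ⟨(-1, 0), by simpa using hc₀, fun k hk => ?_⟩
    fin_cases k <;> simp [wt] at hk ⊢ <;> first | assumption | linarith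
  · refine ⟨(-1, -n), by nlinarith, fun k hk => ?_⟩
    fin_cases k <;> simp [wt] at hk ⊢ <;> first | assumption | linarith

end Stmt11

theorem statement11 (n : ℕ) (hn : 0 < n) (c₀ c₁ : ℝ) (hc₀ : 0 < c₀) (hc₁ : 0 < c₁) :
    { v : Fin 8 → ℂ | ¬ Stmt11.IsSemistable n c₀ c₁ v }
      = { v : Fin 8 → ℂ | v 2 = 0 ∧ v 3 = 0 }
        ∪ { v : Fin 8 → ℂ | v 0 = 0 ∧ v 1 = 0 ∧ v 7 = 0 }
        ∪ { v : Fin 8 → ℂ | v 0 = 0 ∧ v 1 = 0 ∧ v 2 = 0 } := by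
  ext v
  simp only [Set.mem_ofPred_eq, Set.mem_union, Stmt11.not_isSemistable_iff]
  exact ⟨fun ⟨_, hξ, hv⟩ => Stmt11.coords_eq_zero_of_pairing_neg n c₀ c₁ hn hc₀ hc₁ hξ hv,
    Stmt11.exists_pairing_neg_of_coords_eq_zero n c₀ c₁ hc₀ hc₁⟩
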